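/- For natural numbers n ≥ 1 and m ≥ 0, the integral of sin(x)^(2n-1) * cos(2x)^(m - 1/2) / cos(x)^(2n+2m) over x from 0 to π/4 equals (2^(2n-1) / n) * binomial(2m, m) / (binomial(2n+2m, n+m) * binomial(n+m, n)). -/

import Mathlib

/-!
The substitution `u = tan² x` turns the integral into half the Beta integral `B(n, m + 1/2)`,
since `1 - tan² x = cos 2x / cos² x`. Evaluating `Γ` at the integer `n` and at the half-integers
`m + 1/2` and `n + m + 1/2` (where `Γ (k + 1/2) = √π k! C(2k, k) / 4^k`) gives the binomial formula.
-/

open Real Set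
open scoped Nat

theorem Real.Gamma_nat_add_half_eq_centralBinom (k : ℕ) :
    Gamma (k + 1 / 2) = √π * k ! * k.centralBinom / 4 ^ k := by
  induction k with
  | zero => simp [-one_div, Gamma_one_half_eq]
  | succ k ih =>
    have hrec : ((k + 1 : ℕ) : ℝ) * (k + 1).centralBinom = 2 * (2 * k + 1) * k.centralBinom := by
      exact_mod_cast Nat.succ_mul_centralBinom_succ k
    rw [Nat.cast_succ, add_right_comm, Gamma_add_one (by positivity), ih, Nat.factorial_succ,
      Nat.cast_mul, mul_comm ((k + 1 : ℕ) : ℝ), pow_succ]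
    linear_combination (-(√π * k ! / (4 ^ k * 4))) * hrec

theorem ProbabilityTheory.beta_natCast_natCast_add_half {n : ℕ} (hn : 0 < n) (m : ℕ) :
    beta n (m + 1 / 2) =
      4 ^ n / n * m.centralBinom / ((n + m).centralBinom * (n + m).choose n) := by
  obtain ⟨k, rfl⟩ : ∃ k, n = k + 1 := ⟨n - 1, by omega⟩
  have hsum : ((k + 1 : ℕ) : ℝ) + (m + 1 / 2) = ((k + 1 + m : ℕ) : ℝ) + 1 / 2 := by
    push_cast; ring
  rw [beta, hsum, Real.Gamma_nat_add_half_eq_centralBinom, Real.Gamma_nat_add_half_eq_centralBinom,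
    Nat.cast_succ k, Real.Gamma_nat_eq_factorial, Nat.cast_choose ℝ (Nat.le_add_right _ _),
    Nat.add_sub_cancel_left, Nat.factorial_succ]
  field_simp
  push_cast
  ring

theorem integral_rpow_mul_one_sub_rpow_eq_beta {a b : ℝ} (ha : 0 < a) (hb : 0 < b) :
    ∫ u in (0 : ℝ)..1, u ^ (a - 1) * (1 - u) ^ (b - 1) = ProbabilityTheory.beta a b := by
  have hreal : Complex.betaIntegral a b =
      ↑(∫ u in (0 : ℝ)..1, u ^ (a - 1) * (1 - u) ^ (b - 1)) := by
    rw [Complex.betaIntegral, ← intervalIntegral.integral_ofReal]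
    refine intervalIntegral.integral_congr fun u hu => ?_
    rw [uIcc_of_le zero_le_one] at hu
    push_cast [Complex.ofReal_cpow hu.1, Complex.ofReal_cpow (sub_nonneg.2 hu.2)]
    rfl
  rw [ProbabilityTheory.beta_eq_betaIntegralReal a b ha hb, hreal, Complex.ofReal_re]

theorem integral_comp_tan_sq_mul_deriv (g : ℝ → ℝ) {a b : ℝ} (ha : a ∈ Ico 0 (π / 2))
    (hb : b ∈ Ico 0 (π / 2)) :
    ∫ x in a..b, g (tan x ^ 2) * (2 * tan x / cos x ^ 2) = ∫ u in tan a ^ 2..tan b ^ 2, g u := by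
  have hsub : uIcc a b ⊆ Ico 0 (π / 2) := ordConnected_Ico.uIcc_subset ha hb
  have hcos : ∀ x ∈ uIcc a b, cos x ≠ 0 := fun x hx =>
    (cos_pos_of_mem_Ioo ⟨by linarith [pi_pos, (hsub hx).1], (hsub hx).2⟩).ne'
  have hderiv : ∀ x ∈ uIcc a b, HasDerivAt (fun x => tan x ^ 2) (2 * tan x / cos x ^ 2) x := by
    intro x hx
    refine ((hasDerivAt_pow 2 (tan x)).comp x (hasDerivAt_tan (hcos x hx))).congr_deriv ?_
    simp only [Nat.cast_ofNat]
    ring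
  have hIoo : Ioo (min a b) (max a b) ⊆ uIcc a b := Ioo_subset_Icc_self
  exact intervalIntegral.integral_comp_mul_deriv_of_deriv_nonneg
    (fun x hx => (hderiv x hx).continuousAt.continuousWithinAt)
    (fun x hx => hderiv x (hIoo hx))
    (fun x hx => div_nonneg (mul_nonneg zero_le_two
      (tan_nonneg_of_nonneg_of_le_pi_div_two (hsub (hIoo hx)).1 (hsub (hIoo hx)).2.le))
      (sq_nonneg _))

theorem one_sub_tan_sq_eq_cos_two_mul_div {x : ℝ} (hc : cos x ≠ 0) :
    1 - tan x ^ 2 = cos (2 * x) / cos x ^ 2 := by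
  rw [tan_eq_sin_div_cos, cos_two_mul', div_pow]
  field_simp

theorem sin_rpow_mul_cos_two_mul_rpow_mul_cos_rpow_eq {x p r : ℝ} (hs : 0 < sin x)
    (hc : 0 < cos x) (hd : 0 < cos (2 * x)) :
    sin x ^ (2 * p - 1) * cos (2 * x) ^ (r - 1 / 2) * cos x ^ (-(2 * p + 2 * r)) =
      (tan x ^ 2) ^ (p - 1) * (1 - tan x ^ 2) ^ (r + 1 / 2 - 1) * (2 * tan x / cos x ^ 2) / 2 := by
  rw [one_sub_tan_sq_eq_cos_two_mul_div hc.ne', tan_eq_sin_div_cos]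
  -- With all three bases written as exponentials, both sides are `exp` of linear forms.
  obtain ⟨S, hS⟩ : ∃ S, exp S = sin x := ⟨log (sin x), exp_log hs⟩
  obtain ⟨C, hC⟩ : ∃ C, exp C = cos x := ⟨log (cos x), exp_log hc⟩
  obtain ⟨D, hD⟩ : ∃ D, exp D = cos (2 * x) := ⟨log (cos (2 * x)), exp_log hd⟩
  simp only [← hS, ← hC, ← hD, ← exp_sub, ← exp_nat_mul, ← exp_mul, mul_div_assoc, ← exp_add]
  rw [mul_div_cancel₀ _ two_ne_zero, ← exp_add]
  congr 1
  push_cast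
  ring

theorem integral_sin_rpow_mul_cos_two_mul_rpow_mul_cos_rpow {p r : ℝ} (hp : 0 < p)
    (hr : -(1 / 2) < r) :
    ∫ x in (0 : ℝ)..π / 4, sin x ^ (2 * p - 1) * cos (2 * x) ^ (r - 1 / 2) *
        cos x ^ (-(2 * p + 2 * r)) = ProbabilityTheory.beta p (r + 1 / 2) / 2 := by
  have hpi := pi_pos
  have hpt : (Ioo 0 (π / 4)).EqOn
      (fun x => sin x ^ (2 * p - 1) * cos (2 * x) ^ (r - 1 / 2) * cos x ^ (-(2 * p + 2 * r)))
      (fun x => (tan x ^ 2) ^ (p - 1) * (1 - tan x ^ 2) ^ (r + 1 / 2 - 1) *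
        (2 * tan x / cos x ^ 2) / 2) := fun x hx =>
    sin_rpow_mul_cos_two_mul_rpow_mul_cos_rpow_eq
      (sin_pos_of_pos_of_lt_pi hx.1 (by linarith [hx.2]))
      (cos_pos_of_mem_Ioo ⟨by linarith [hx.1], by linarith [hx.2]⟩)
      (cos_pos_of_mem_Ioo ⟨by linarith [hx.1], by linarith [hx.2]⟩)
  rw [intervalIntegral.integral_congr_Ioo_of_le (by positivity) hpt, intervalIntegral.integral_div,
    integral_comp_tan_sq_mul_deriv (fun u => u ^ (p - 1) * (1 - u) ^ (r + 1 / 2 - 1))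
      ⟨le_rfl, by positivity⟩ ⟨by positivity, by linarith⟩,
    tan_zero, tan_pi_div_four, zero_pow two_ne_zero, one_pow,
    integral_rpow_mul_one_sub_rpow_eq_beta hp (by linarith)]

theorem stmt17 (n m : ℕ) (hn : 1 ≤ n) :
    ∫ x in (0:ℝ)..(π/4), (Real.sin x) ^ (2 * n - 1 : ℕ) * (Real.cos (2 * x)) ^ ((m : ℝ) - 1/2) *
        (Real.cos x) ^ (-(2 * (n : ℝ) + 2 * (m : ℝ))) =
      2 ^ (2 * n - 1) / (n : ℝ) * (Nat.choose (2 * m) m : ℝ) /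
        ((Nat.choose (2 * n + 2 * m) (n + m) : ℝ) * (Nat.choose (n + m) n : ℝ)) := by
  have hsin (x : ℝ) : sin x ^ (2 * n - 1 : ℕ) = sin x ^ (2 * (n : ℝ) - 1) := by
    rw [← rpow_natCast, Nat.cast_sub (by omega), Nat.cast_mul, Nat.cast_ofNat, Nat.cast_one]
  have hpow : (4 : ℝ) ^ n = 2 * 2 ^ (2 * n - 1) := by
    rw [← pow_succ', Nat.sub_add_cancel (by omega), pow_mul]
    norm_num
  simp_rw [hsin]
  rw [integral_sin_rpow_mul_cos_two_mul_rpow_mul_cos_rpow (Nat.cast_pos.2 hn)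
      (by linarith [m.cast_nonneg (α := ℝ)]),
    ProbabilityTheory.beta_natCast_natCast_add_half hn, Nat.centralBinom_eq_two_mul_choose,
    Nat.centralBinom_eq_two_mul_choose, mul_add, hpow]
  ring
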